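/- Let α and β be pmp actions of a countable group Γ on standard probability spaces (X,μ) and (Y,ν) with α a factor of β via π : Y → X, and suppose θ_α = θ_β. Then for every finite S ⊆ Γ, π restricted to almost every Γ-orbit is an isomorphism of S-labelled Schreier graphs; in particular π is a colored graphing factor map from G_{β,S} to G_{α,S}. -/

import Mathlib

/-!
Equality of the IRSs gives, for each `g`, `ν {y | g • y = y} = μ {x | g • x = x}`, and the
latter is `ν {y | g • π y = π y}` since `π` is measure preserving. By equivariance the first set
is a.e. contained in the second, so the two agree a.e. Countably many `g` then give
`Stab (π y) ≤ Stab y` for a.e. `y`, and an equivariant map with this property is injective on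
the orbit, which makes it an isomorphism of `S`-labelled Schreier graphs.
-/

open MeasureTheory MulAction

/-- The space of subgroups of `Γ`, with the Borel structure inherited from `{0,1}^Γ`. -/
instance subgroupMeasurableSpace (Γ : Type*) [Group Γ] : MeasurableSpace (Subgroup Γ) :=
  MeasurableSpace.comap (fun (H : Subgroup Γ) (g : Γ) => (g ∈ H : Prop)) inferInstance

lemma measurableSet_setOf_mem_subgroup {Γ : Type*} [Group Γ] (g : Γ) :
    MeasurableSet {H : Subgroup Γ | g ∈ H} :=
  ⟨(fun f : Γ → Prop => f g) ⁻¹' {p : Prop | p}, measurable_pi_apply g trivial, rfl⟩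

section Orbit

variable {Γ X Y : Type*} [Group Γ] [MulAction Γ X] [MulAction Γ Y] {π : Y → X} {y : Y}

lemma smul_eq_smul_of_map_eq (hπ : ∀ γ : Γ, π (γ • y) = γ • π y)
    (hstab : stabilizer Γ (π y) ≤ stabilizer Γ y) {γ γ' : Γ}
    (h : π (γ • y) = π (γ' • y)) : γ • y = γ' • y := by
  have hfix : (γ'⁻¹ * γ) • π y = π y := by
    rw [mul_smul, ← hπ, h, hπ, inv_smul_smul]
  have : (γ'⁻¹ * γ) • y = y := hstab hfix
  rwa [mul_smul, inv_smul_eq_iff] at this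

lemma smul_eq_smul_iff_map_eq (hπ : ∀ γ : Γ, π (γ • y) = γ • π y)
    (hstab : stabilizer Γ (π y) ≤ stabilizer Γ y) (s γ γ' : Γ) :
    s • γ • y = γ' • y ↔ s • π (γ • y) = π (γ' • y) := by
  have hs : s • π (γ • y) = π ((s * γ) • y) := by rw [hπ, hπ, mul_smul]
  rw [hs, mul_smul]
  refine ⟨congrArg π, fun h => ?_⟩
  simpa only [mul_smul] using smul_eq_smul_of_map_eq hπ hstab (γ := s * γ) (by rwa [mul_smul])

end Orbit

section Factor

variable {Γ X Y : Type*} [Group Γ] [MulAction Γ X] [MulAction Γ Y]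
  [MeasurableSpace X] [MeasurableSpace Y] {μ : Measure X} {ν : Measure Y} {π : Y → X}

lemma ae_smul_eq_of_smul_map_eq [IsFiniteMeasure ν]
    (hmX : Measurable (fun x : X => stabilizer Γ x))
    (hmY : Measurable (fun y : Y => stabilizer Γ y))
    (hπ : MeasurePreserving π ν μ) (hequiv : ∀ᵐ y ∂ν, ∀ γ : Γ, π (γ • y) = γ • π y)
    (hirs : μ.map (fun x : X => stabilizer Γ x) = ν.map (fun y : Y => stabilizer Γ y))
    (g : Γ) : ∀ᵐ y ∂ν, g • π y = π y → g • y = y := by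
  have hmem := measurableSet_setOf_mem_subgroup g
  have hsub : {y : Y | g • y = y} ≤ᵐ[ν] π ⁻¹' {x | g • x = x} :=
    hequiv.mono fun y hy (hgy : g • y = y) => show g • π y = π y by rw [← hy, hgy]
  have hmeas : ν (π ⁻¹' {x | g • x = x}) = ν {y : Y | g • y = y} :=
    calc ν (π ⁻¹' {x | g • x = x}) = μ {x | g • x = x} :=
          hπ.measure_preimage (hmX hmem).nullMeasurableSet
      _ = μ.map (fun x : X => stabilizer Γ x) {H | g ∈ H} := (Measure.map_apply hmX hmem).symm
      _ = ν {y | g • y = y} := by rw [hirs, Measure.map_apply hmY hmem]; rfl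
  exact (ae_eq_of_ae_subset_of_measure_ge hsub hmeas.le (hmY hmem).nullMeasurableSet
    (measure_ne_top _ _)).symm.le

lemma ae_stabilizer_map_le_stabilizer [Countable Γ] [IsFiniteMeasure ν]
    (hmX : Measurable (fun x : X => stabilizer Γ x))
    (hmY : Measurable (fun y : Y => stabilizer Γ y))
    (hπ : MeasurePreserving π ν μ) (hequiv : ∀ᵐ y ∂ν, ∀ γ : Γ, π (γ • y) = γ • π y)
    (hirs : μ.map (fun x : X => stabilizer Γ x) = ν.map (fun y : Y => stabilizer Γ y)) :
    ∀ᵐ y ∂ν, stabilizer Γ (π y) ≤ stabilizer Γ y :=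
  (ae_all_iff.2 (ae_smul_eq_of_smul_map_eq hmX hmY hπ hequiv hirs)).mono fun _ h g => h g

end Factor

theorem stmt18_general {Γ X Y : Type*} [Group Γ] [Countable Γ]
    [MeasurableSpace X] [MeasurableSpace Y]
    [MulAction Γ X] [MulAction Γ Y]
    (μ : Measure X) (ν : Measure Y) [IsProbabilityMeasure ν]
    (hmX : Measurable (fun x : X => MulAction.stabilizer Γ x))
    (hmY : Measurable (fun y : Y => MulAction.stabilizer Γ y))
    (π : Y → X) (hπ : MeasurePreserving π ν μ)
    (hequiv : ∀ᵐ y ∂ν, ∀ γ : Γ, π (γ • y) = γ • π y)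
    (hirs : Measure.map (fun x : X => MulAction.stabilizer Γ x) μ
          = Measure.map (fun y : Y => MulAction.stabilizer Γ y) ν)
    (S : Finset Γ) :
    ∀ᵐ y ∂ν,
      (∀ γ : Γ, π (γ • y) = γ • π y) ∧
      (∀ γ γ' : Γ, π (γ • y) = π (γ' • y) → γ • y = γ' • y) ∧
      (∀ γ γ' : Γ, ∀ s ∈ S, (s • (γ • y) = γ' • y ↔ s • π (γ • y) = π (γ' • y))) := by
  filter_upwards [hequiv, ae_stabilizer_map_le_stabilizer hmX hmY hπ hequiv hirs]
    with y hπy hstab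
  exact ⟨hπy, fun _ _ => smul_eq_smul_of_map_eq hπy hstab,
    fun γ γ' s _ => smul_eq_smul_iff_map_eq hπy hstab s γ γ'⟩

/-- Let `α`, `β` be pmp actions of a countable group `Γ` on standard
probability spaces `(X,μ)`, `(Y,ν)` with `α` a factor of `β` via `π : Y → X`, and suppose
`θ_α = θ_β`. Then for every finite `S ⊆ Γ` and almost every `y`, the restriction of `π` to
the orbit of `y` is an isomorphism of `S`-labelled Schreier graphs: it is equivariant,
injective on the orbit, and preserves and reflects the `S`-labels of edges. In particular
`π` is a colored graphing factor map from `G_{β,S}` to `G_{α,S}`. -/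
theorem stmt18 {Γ X Y : Type*} [Group Γ] [Countable Γ]
    [MeasurableSpace X] [StandardBorelSpace X] [MeasurableSpace Y] [StandardBorelSpace Y]
    [MulAction Γ X] [MulAction Γ Y]
    (μ : Measure X) (ν : Measure Y) [IsProbabilityMeasure μ] [IsProbabilityMeasure ν]
    (hα : ∀ γ : Γ, MeasurePreserving (fun x : X => γ • x) μ μ)
    (hβ : ∀ γ : Γ, MeasurePreserving (fun y : Y => γ • y) ν ν)
    (hmX : Measurable (fun x : X => MulAction.stabilizer Γ x))
    (hmY : Measurable (fun y : Y => MulAction.stabilizer Γ y))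
    (π : Y → X) (hπ : MeasurePreserving π ν μ)
    (hequiv : ∀ᵐ y ∂ν, ∀ γ : Γ, π (γ • y) = γ • π y)
    (hirs : Measure.map (fun x : X => MulAction.stabilizer Γ x) μ
          = Measure.map (fun y : Y => MulAction.stabilizer Γ y) ν)
    (S : Finset Γ) :
    ∀ᵐ y ∂ν,
      (∀ γ : Γ, π (γ • y) = γ • π y) ∧
      (∀ γ γ' : Γ, π (γ • y) = π (γ' • y) → γ • y = γ' • y) ∧
      (∀ γ γ' : Γ, ∀ s ∈ S, (s • (γ • y) = γ' • y ↔ s • π (γ • y) = π (γ' • y))) :=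
  stmt18_general μ ν hmX hmY π hπ hequiv hirs S
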